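/- Let φ, ψ ∈ ℂ^d be unit vectors (d ≥ 2), let ω be a 2×2 density matrix with entries ω_{kl}, and let P be the orthogonal projector onto span{φ̄, ψ̄} ⊂ ℂ^d (complex conjugates in the standard basis). Define Ξ on ℂ^d ⊗ ℂ² by Ξ = (1/2)[ ω₀₀ P ⊗ |0⟩⟨0| + ω₀₁ |φ̄⟩⟨ψ̄| ⊗ |0⟩⟨1| + ω₁₀ |ψ̄⟩⟨φ̄| ⊗ |1⟩⟨0| + ω₁₁ P ⊗ |1⟩⟨1| ]. Then the partial transpose of Ξ on the second (qubit) factor equals the operator obtained from Ξ by replacing ω with its transpose and exchanging the roles of φ and ψ; in particular, Ξ is positive semidefinite and has positive semidefinite partial transpose. -/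

import Mathlib

open Matrix Kronecker
open scoped ComplexOrder

/-- The rank-one operator |v⟩⟨w| on ℂ^d. -/
noncomputable def outer {d : ℕ} (v w : Fin d → ℂ) : Matrix (Fin d) (Fin d) ℂ :=
  Matrix.vecMulVec v (star w)

/-- The operator Ξ = (1/2)[ω₀₀ P⊗|0⟩⟨0| + ω₀₁|u⟩⟨v|⊗|0⟩⟨1| + ω₁₀|v⟩⟨u|⊗|1⟩⟨0|
+ ω₁₁ P⊗|1⟩⟨1|] on ℂ^d ⊗ ℂ². -/
noncomputable def Xi {d : ℕ} (ω : Matrix (Fin 2) (Fin 2) ℂ) (u v : Fin d → ℂ)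
    (P : Matrix (Fin d) (Fin d) ℂ) : Matrix (Fin d × Fin 2) (Fin d × Fin 2) ℂ :=
  (1/2 : ℂ) • (ω 0 0 • P ⊗ₖ Matrix.single 0 0 (1 : ℂ)
    + ω 0 1 • (outer u v) ⊗ₖ Matrix.single 0 1 (1 : ℂ)
    + ω 1 0 • (outer v u) ⊗ₖ Matrix.single 1 0 (1 : ℂ)
    + ω 1 1 • P ⊗ₖ Matrix.single 1 1 (1 : ℂ))

/-- Partial transpose on the second (qubit) factor. -/
noncomputable def ptC {d : ℕ} (M : Matrix (Fin d × Fin 2) (Fin d × Fin 2) ℂ) :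
    Matrix (Fin d × Fin 2) (Fin d × Fin 2) ℂ :=
  Matrix.of fun p q => M (p.1, q.2) (q.1, p.2)

/-!
Writing `X` (`colPair u v`) for the `(d·2) × 2` matrix with columns `u ⊗ e₀` and `v ⊗ e₁`,
`2 Ξ = X ω Xᴴ + ω₀₀ (P - |u⟩⟨u|) ⊗ |0⟩⟨0| + ω₁₁ (P - |v⟩⟨v|) ⊗ |1⟩⟨1|`.
The first term is positive because `ω` is, and the other two because `P - |u⟩⟨u|` is again an
orthogonal projection when `P` fixes the unit vector `u`, and `ω₀₀, ω₁₁ ≥ 0`.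
The partial transpose is an entrywise computation: it transposes `ω` and swaps `u` and `v`,
so it is of the same form and hence positive as well.
-/

namespace Matrix

variable {𝕜 n : Type*} [RCLike 𝕜] [Fintype n]

theorem IsStarProjection.posSemidef {A : Matrix n n 𝕜} (hA : IsStarProjection A) :
    A.PosSemidef := by
  have h := posSemidef_conjTranspose_mul_self A
  rwa [← star_eq_conjTranspose, hA.isSelfAdjoint.star_eq, hA.isIdempotentElem.eq] at h

theorem isStarProjection_single_self [DecidableEq n] (i : n) :
    IsStarProjection (single i i (1 : 𝕜)) where
  isIdempotentElem := by simp [IsIdempotentElem, single_mul_single_same]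
  isSelfAdjoint := by simp [IsSelfAdjoint, star_eq_conjTranspose, conjTranspose_single]

theorem isStarProjection_vecMulVec_star {u : n → 𝕜} (hu : star u ⬝ᵥ u = 1) :
    IsStarProjection (vecMulVec u (star u)) where
  isIdempotentElem := by simp [IsIdempotentElem, vecMulVec_mul_vecMulVec, hu]
  isSelfAdjoint := by simp [IsSelfAdjoint, star_eq_conjTranspose]

theorem IsStarProjection.sub_vecMulVec_star {P : Matrix n n 𝕜} (hP : IsStarProjection P)
    {u : n → 𝕜} (hu : star u ⬝ᵥ u = 1) (hPu : P *ᵥ u = u) :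
    IsStarProjection (P - vecMulVec u (star u)) :=
  (isStarProjection_vecMulVec_star hu).sub_of_mul_eq_right hP (by rw [mul_vecMulVec, hPu])

end Matrix

noncomputable def colPair {d : ℕ} (u v : Fin d → ℂ) : Matrix (Fin d × Fin 2) (Fin 2) ℂ :=
  Matrix.of fun p l => if p.2 = l then ![u, v] l p.1 else 0

theorem Xi_eq_colPair {d : ℕ} (ω : Matrix (Fin 2) (Fin 2) ℂ) (u v : Fin d → ℂ)
    (P : Matrix (Fin d) (Fin d) ℂ) :
    Xi ω u v P = (1/2 : ℂ) • (colPair u v * ω * (colPair u v)ᴴ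
      + ω 0 0 • (P - outer u u) ⊗ₖ single 0 0 (1 : ℂ)
      + ω 1 1 • (P - outer v v) ⊗ₖ single 1 1 (1 : ℂ)) := by
  ext ⟨i, k⟩ ⟨j, l⟩
  fin_cases k <;> fin_cases l <;>
    simp [Xi, colPair, outer, mul_apply, Fin.sum_univ_two, vecMulVec_apply, single,
      kroneckerMap_apply] <;> ring

theorem ptC_Xi {d : ℕ} (ω : Matrix (Fin 2) (Fin 2) ℂ) (u v : Fin d → ℂ)
    (P : Matrix (Fin d) (Fin d) ℂ) : ptC (Xi ω u v P) = Xi ωᵀ v u P := by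
  ext ⟨i, k⟩ ⟨j, l⟩
  fin_cases k <;> fin_cases l <;>
    simp [ptC, Xi, outer, vecMulVec_apply, single, kroneckerMap_apply]

theorem Xi_posSemidef {d : ℕ} {ω : Matrix (Fin 2) (Fin 2) ℂ} (hω : ω.PosSemidef)
    {u v : Fin d → ℂ} (hu : star u ⬝ᵥ u = 1) (hv : star v ⬝ᵥ v = 1)
    {P : Matrix (Fin d) (Fin d) ℂ} (hP : IsStarProjection P)
    (hPu : P *ᵥ u = u) (hPv : P *ᵥ v = v) : (Xi ω u v P).PosSemidef := by
  have hu_block := ((hP.sub_vecMulVec_star hu hPu).posSemidef.kronecker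
    (isStarProjection_single_self (0 : Fin 2)).posSemidef).smul (hω.diag_nonneg (i := 0))
  have hv_block := ((hP.sub_vecMulVec_star hv hPv).posSemidef.kronecker
    (isStarProjection_single_self (1 : Fin 2)).posSemidef).smul (hω.diag_nonneg (i := 1))
  rw [Xi_eq_colPair]
  exact (((hω.mul_mul_conjTranspose_same _).add hu_block).add hv_block).smul
    (by norm_num [Complex.le_def] : (0 : ℂ) ≤ 1 / 2)

theorem stmt14_general {d : ℕ} (φ ψ : Fin d → ℂ)
    (hφ : dotProduct (star φ) φ = 1) (hψ : dotProduct (star ψ) ψ = 1)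
    (ω : Matrix (Fin 2) (Fin 2) ℂ) (hω : ω.PosSemidef)
    (P : Matrix (Fin d) (Fin d) ℂ)
    (hPsa : Pᴴ = P) (hPP : P * P = P)
    (hPφ : P.mulVec (star φ) = star φ) (hPψ : P.mulVec (star ψ) = star ψ) :
    ptC (Xi ω (star φ) (star ψ) P) = Xi ωᵀ (star ψ) (star φ) P
      ∧ (Xi ω (star φ) (star ψ) P).PosSemidef
      ∧ (ptC (Xi ω (star φ) (star ψ) P)).PosSemidef := by
  have hP : IsStarProjection P := ⟨hPP, hPsa⟩
  have hφ' : star (star φ) ⬝ᵥ star φ = 1 := by rwa [star_star, dotProduct_comm]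
  have hψ' : star (star ψ) ⬝ᵥ star ψ = 1 := by rwa [star_star, dotProduct_comm]
  refine ⟨ptC_Xi ω _ _ P, Xi_posSemidef hω hφ' hψ' hP hPφ hPψ, ?_⟩
  rw [ptC_Xi]
  exact Xi_posSemidef hω.transpose hψ' hφ' hP hPψ hPφ

/-- For unit vectors φ, ψ ∈ ℂ^d, a 2×2 density matrix ω, and P the orthogonal projector
onto span{φ̄, ψ̄}, the partial transpose of Ξ(ω,φ̄,ψ̄) equals Ξ(ωᵀ,ψ̄,φ̄); in particular Ξ
is positive semidefinite with positive semidefinite partial transpose. -/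
theorem stmt14 {d : ℕ} (hd : 2 ≤ d) (φ ψ : Fin d → ℂ)
    (hφ : dotProduct (star φ) φ = 1) (hψ : dotProduct (star ψ) ψ = 1)
    (ω : Matrix (Fin 2) (Fin 2) ℂ) (hω : ω.PosSemidef) (hωtr : ω.trace = 1)
    (P : Matrix (Fin d) (Fin d) ℂ)
    (hPsa : Pᴴ = P) (hPP : P * P = P)
    (hPφ : P.mulVec (star φ) = star φ) (hPψ : P.mulVec (star ψ) = star ψ)
    (hPrange : ∀ v : Fin d → ℂ,
      P.mulVec v ∈ Submodule.span ℂ {star φ, star ψ}) :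
    ptC (Xi ω (star φ) (star ψ) P) = Xi ωᵀ (star ψ) (star φ) P
      ∧ (Xi ω (star φ) (star ψ) P).PosSemidef
      ∧ (ptC (Xi ω (star φ) (star ψ) P)).PosSemidef :=
  stmt14_general φ ψ hφ hψ ω hω P hPsa hPP hPφ hPψ
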